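/- For every integer n ≥ 2, the large rank of the Brandt semigroup B_n (the Brandt semigroup over the trivial group) is r₅(B_n) = n² − n + 3. -/

import Mathlib

/-- The Brandt semigroup `B(G, n)` over a group `G`: underlying set
`([n] × G × [n]) ∪ {0}`, encoded as `Option (Fin n × G × Fin n)` with `none`
playing the role of the zero element `0`. -/
def Brandt (G : Type*) (n : ℕ) : Type _ := Option (Fin n × G × Fin n)

namespace Brandt

/-- The zero element `0` of the Brandt semigroup. -/
def zero {G : Type*} {n : ℕ} : Brandt G n := none

/-- The element `(i, a, j)` of the Brandt semigroup. -/
def elem {G : Type*} {n : ℕ} (i : Fin n) (a : G) (j : Fin n) : Brandt G n := some (i, a, j)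

/-- Multiplication: `(i, a, j)(k, b, l) = (i, ab, l)` if `j = k` and `0` otherwise,
with `0` acting as a zero element. -/
def mul {G : Type*} [Group G] {n : ℕ} : Brandt G n → Brandt G n → Brandt G n
  | none, _ => none
  | some _, none => none
  | some (i, a, j), some (k, b, l) => if j = k then some (i, a * b, l) else none

instance (G : Type*) [Group G] (n : ℕ) : Semigroup (Brandt G n) where
  mul := mul
  mul_assoc x y z := by
    show mul (mul x y) z = mul x (mul y z)
    rcases x with _ | ⟨i, a, j⟩ <;> rcases y with _ | ⟨k, b, l⟩ <;> rcases z with _ | ⟨m, c, p⟩ <;>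
      simp only [mul] <;> (try rfl) <;> (try by_cases h1 : j = k) <;> (try by_cases h2 : l = m) <;>
      simp_all [mul_assoc] <;> rfl

instance (G : Type*) [Fintype G] (n : ℕ) : Fintype (Brandt G n) :=
  inferInstanceAs (Fintype (Option (Fin n × G × Fin n)))

instance (G : Type*) [DecidableEq G] (n : ℕ) : DecidableEq (Brandt G n) :=
  inferInstanceAs (DecidableEq (Option (Fin n × G × Fin n)))

end Brandt

/-! A subset of `Bₙ` missing at most `n - 2` elements generates: `0` is the square of any present
off-diagonal element `(k, j)`, and a missing `(i, j)` factors as `(i, k)(k, j)`; for the `n - 2`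
indices `k ∉ {i, j}` these factor pairs are disjoint and avoid `(i, j)`, so breaking all of them
would take `n - 2` further missing elements. Conversely, removing the `n - 1` elements `(i, j)` with
`j ≠ i` of one row `i` leaves a proper subsemigroup of size `n² - n + 2`. -/

open Finset

theorem Subsemigroup.card_lt_of_forall_card_eq_closure_eq_top {M : Type*} [Mul M] {k : ℕ}
    (hk : ∀ U : Finset M, U.card = k → closure (U : Set M) = ⊤) {s : Finset M}
    (hs : closure (s : Set M) ≠ ⊤) : s.card < k := by
  by_contra! hks
  obtain ⟨U, hUs, hU⟩ := exists_subset_card_eq hks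
  exact hs (top_le_iff.1 (hk U hU ▸ closure_mono hUs))

namespace Brandt

variable {G : Type*} {n : ℕ}

@[simp]
theorem elem_inj {i j k l : Fin n} {a b : G} :
    (elem i a j : Brandt G n) = elem k b l ↔ i = k ∧ a = b ∧ j = l := by
  change (some (i, a, j) : Option (Fin n × G × Fin n)) = some (k, b, l) ↔ _
  simp

@[simp]
theorem elem_ne_zero (i j : Fin n) (a : G) : (elem i a j : Brandt G n) ≠ zero :=
  Option.some_ne_none _

theorem card_eq [Fintype G] : Fintype.card (Brandt G n) = n ^ 2 * Fintype.card G + 1 := by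
  change Fintype.card (Option (Fin n × G × Fin n)) = _
  simp only [Fintype.card_option, Fintype.card_prod, Fintype.card_fin]
  ring

section Mul

variable [Group G]

theorem mul_zero (x : Brandt G n) : x * zero = zero := by
  rcases x with _ | ⟨i, a, j⟩ <;> rfl

theorem elem_mul_elem (i j k l : Fin n) (a b : G) :
    elem i a j * elem k b l = if j = k then elem i (a * b) l else zero := rfl

theorem elem_mul_elem_self (i j k : Fin n) (a b : G) :
    elem i a j * elem j b k = elem i (a * b) k := by
  simp [elem_mul_elem]

theorem elem_mul_elem_of_ne {i j k l : Fin n} (a b : G) (h : j ≠ k) :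
    elem i a j * elem k b l = zero := by
  simp [elem_mul_elem, h]

section Generation

variable [Fintype G] [DecidableEq G] {U : Finset (Brandt G n)}

theorem zero_mem_closure_of_card_compl_le (hU : Uᶜ.card ≤ n - 2) :
    zero ∈ Subsemigroup.closure (U : Set (Brandt G n)) := by
  by_cases hzero : zero ∈ U
  · exact Subsemigroup.subset_closure hzero
  have hn : 2 < n := by
    have : 0 < Uᶜ.card := card_pos.2 ⟨zero, mem_compl.2 hzero⟩
    omega
  let j : Fin n := ⟨0, by omega⟩
  have hcol : Uᶜ.card < ((univ.erase j).image fun k => (elem k 1 j : Brandt G n)).card := by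
    rw [card_image_of_injective _ fun k l h => (elem_inj.1 h).1, card_erase_of_mem (mem_univ j),
      card_univ, Fintype.card_fin]
    omega
  obtain ⟨x, hx, hxU⟩ := exists_mem_notMem_of_card_lt_card hcol
  obtain ⟨k, hk, rfl⟩ := mem_image.1 hx
  rw [mem_compl, not_not] at hxU
  rw [← elem_mul_elem_of_ne 1 1 (ne_of_mem_erase hk).symm]
  exact mul_mem (Subsemigroup.subset_closure hxU) (Subsemigroup.subset_closure hxU)

theorem elem_mem_closure_of_card_compl_le (hU : Uᶜ.card ≤ n - 2) (i j : Fin n) (a : G) :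
    elem i a j ∈ Subsemigroup.closure (U : Set (Brandt G n)) := by
  by_cases hij : elem i a j ∈ U
  · exact Subsemigroup.subset_closure hij
  suffices ∃ k, elem i 1 k ∈ U ∧ elem k a j ∈ U by
    obtain ⟨k, hik, hkj⟩ := this
    rw [← one_mul a, ← elem_mul_elem_self]
    exact mul_mem (Subsemigroup.subset_closure hik) (Subsemigroup.subset_closure hkj)
  by_contra! hbroken
  let missing (k : Fin n) : Brandt G n := if elem i 1 k ∈ U then elem k a j else elem i 1 k
  have hmaps : Set.MapsTo missing ↑(univ \ {i, j}) ↑(Uᶜ.erase (elem i a j)) := by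
    intro k hk
    have hk' : k ≠ i ∧ k ≠ j := by simpa [not_or] using hk
    simp only [missing, coe_erase, Set.mem_sdiff, mem_coe, mem_compl, Set.mem_singleton_iff]
    split_ifs with hik
    · exact ⟨hbroken k hik, fun h => hk'.1 (elem_inj.1 h).1⟩
    · exact ⟨hik, fun h => hk'.2 (elem_inj.1 h).2.2⟩
  have hinj : Set.InjOn missing ↑(univ \ {i, j}) := by
    intro k hk l hl hkl
    have hk' : k ≠ i ∧ k ≠ j := by simpa [not_or] using hk
    have hl' : l ≠ i ∧ l ≠ j := by simpa [not_or] using hl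
    simp only [missing] at hkl
    split_ifs at hkl <;> simp_all
  have hle := card_le_card_of_injOn missing hmaps hinj
  have hpair : ({i, j} : Finset (Fin n)).card ≤ 2 := card_le_two
  rw [card_sdiff_of_subset (subset_univ _), card_univ, Fintype.card_fin,
    card_erase_of_mem (mem_compl.2 hij)] at hle
  have : 0 < Uᶜ.card := card_pos.2 ⟨_, mem_compl.2 hij⟩
  omega

theorem closure_eq_top_of_card_compl_le (hU : Uᶜ.card ≤ n - 2) :
    Subsemigroup.closure (U : Set (Brandt G n)) = ⊤ := by
  refine eq_top_iff.2 fun x _ => ?_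
  rcases x with _ | ⟨i, a, j⟩
  · exact zero_mem_closure_of_card_compl_le hU
  · exact elem_mem_closure_of_card_compl_le hU i j a

end Generation

end Mul

section RowOffDiag

variable [Fintype G] [DecidableEq G]

def rowOffDiag (i : Fin n) : Finset (Brandt G n) :=
  ((univ.erase i) ×ˢ univ).image fun p => elem i p.2 p.1

theorem mem_rowOffDiag {i : Fin n} {x : Brandt G n} :
    x ∈ rowOffDiag i ↔ ∃ j a, j ≠ i ∧ x = elem i a j := by
  simp [rowOffDiag, eq_comm, and_comm]

theorem card_rowOffDiag (i : Fin n) :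
    (rowOffDiag i : Finset (Brandt G n)).card = (n - 1) * Fintype.card G := by
  rw [rowOffDiag, card_image_of_injective, card_product, card_erase_of_mem (mem_univ i),
    card_univ, card_univ, Fintype.card_fin]
  rintro ⟨j, a⟩ ⟨l, b⟩ h
  simp_all

variable [Group G]

theorem mul_notMem_rowOffDiag {i : Fin n} {x y : Brandt G n} (hx : x ∉ rowOffDiag i)
    (hy : y ∉ rowOffDiag i) : x * y ∉ rowOffDiag i := by
  rcases x with _ | ⟨p, a, q⟩
  · exact hx
  rcases y with _ | ⟨r, b, s⟩
  · change elem p a q * zero ∉ rowOffDiag i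
    rwa [mul_zero]
  change elem p a q * elem r b s ∉ rowOffDiag i
  change elem p a q ∉ rowOffDiag i at hx
  change elem r b s ∉ rowOffDiag i at hy
  simp only [mem_rowOffDiag, elem_inj, not_exists, not_and] at hx hy
  by_cases hqr : q = r
  · subst hqr
    rw [elem_mul_elem_self, mem_rowOffDiag]
    rintro ⟨j, c, hj, h⟩
    obtain ⟨rfl, -, rfl⟩ := elem_inj.1 h
    by_cases hq : q = p
    · subst hq
      exact hy _ b hj rfl rfl rfl
    · exact hx q a hq rfl rfl rfl
  · rw [elem_mul_elem_of_ne a b hqr, mem_rowOffDiag]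
    rintro ⟨j, c, -, h⟩
    exact elem_ne_zero i j c h.symm

theorem closure_compl_rowOffDiag_ne_top {i j : Fin n} (hji : j ≠ i) :
    Subsemigroup.closure (((rowOffDiag i)ᶜ : Finset (Brandt G n)) : Set (Brandt G n)) ≠ ⊤ := by
  let W : Subsemigroup (Brandt G n) :=
    { carrier := {x | x ∉ rowOffDiag i}
      mul_mem' := mul_notMem_rowOffDiag }
  intro htop
  have hW : elem i 1 j ∈ W :=
    Subsemigroup.closure_le.2 (fun x hx => mem_compl.1 hx) (htop ▸ Subsemigroup.mem_top _)
  exact hW (mem_rowOffDiag.2 ⟨j, 1, hji, rfl⟩)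

end RowOffDiag

end Brandt

/-- For `n ≥ 2`, the large rank of the Brandt semigroup `Bₙ = B(G, n)` over the
trivial group — the least `k` such that every subset of cardinality `k` generates
`Bₙ` — equals `n² - n + 3`. -/
theorem largeRank_brandt_trivial_group (n : ℕ) (hn : 2 ≤ n) :
    IsLeast {k : ℕ | ∀ U : Finset (Brandt PUnit n), U.card = k →
        Subsemigroup.closure (U : Set (Brandt PUnit n)) = ⊤}
      (n ^ 2 - n + 3) := by
  have hcard : Fintype.card (Brandt PUnit n) = n ^ 2 + 1 := by
    simp [Brandt.card_eq]
  have hn_sq : n ≤ n ^ 2 := Nat.le_self_pow two_ne_zero n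
  refine ⟨fun U hU => Brandt.closure_eq_top_of_card_compl_le ?_, fun k hk => ?_⟩
  · rw [card_compl, hcard, hU]
    omega
  · have hlt := Subsemigroup.card_lt_of_forall_card_eq_closure_eq_top hk
      (Brandt.closure_compl_rowOffDiag_ne_top (G := PUnit) (i := ⟨0, by omega⟩) (j := ⟨1, by omega⟩)
        (by simp))
    rw [card_compl, hcard, Brandt.card_rowOffDiag, Fintype.card_punit, mul_one] at hlt
    omega
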